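/- arXiv:2407.16152 — 2 statements merged into one kernel-verified Lean document; each statement's English description precedes it below -/
import Mathlib

section
/- Let Π_r, Π_c be n×K membership matrices each containing a full set of pure nodes (so Π_r(I_r,:) = I_K and Π_c(I_c,:) = I_K for some index sets I_r, I_c of size K), let ρ ∈ (0,1], let B_1,…,B_L be K×K matrices, and set Ω_l = ρ Π_r B_l Π_c'. If the K×K matrix Σ_{l=1}^L B_l B_l' has rank K, then the n×n matrix S̃_r = Σ_{l=1}^L Ω_l Ω_l' has rank K. -/
open Matrix

private lemma sum_mulVec' {K L : ℕ} (T : Fin L → Matrix (Fin K) (Fin K) ℝ)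
    (x : Fin K → ℝ) : (∑ l, T l) *ᵥ x = ∑ l, T l *ᵥ x := by
  ext i
  simp only [Matrix.mulVec, dotProduct, Matrix.sum_apply, Finset.sum_apply,
    Finset.sum_mul]
  rw [Finset.sum_comm]

private lemma dot_sum' {K L : ℕ} (x : Fin K → ℝ) (v : Fin L → Fin K → ℝ) :
    x ⬝ᵥ (∑ l, v l) = ∑ l, x ⬝ᵥ v l := by
  simp only [dotProduct, Finset.sum_apply, Finset.mul_sum]
  rw [Finset.sum_comm]

private lemma dot_self_nonneg {K : ℕ} (v : Fin K → ℝ) : 0 ≤ v ⬝ᵥ v :=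
  Finset.sum_nonneg fun i _ => mul_self_nonneg _

private lemma isUnit_of_rank_eq_card {K : ℕ} (D : Matrix (Fin K) (Fin K) ℝ)
    (h : D.rank = K) : IsUnit D := by
  have htop : LinearMap.range D.mulVecLin = ⊤ := by
    apply Submodule.eq_top_of_finrank_eq
    rw [← Matrix.rank, h]
    simp
  refine Matrix.mulVec_surjective_iff_isUnit.mp ?_
  intro v
  obtain ⟨w, hw⟩ := (LinearMap.range_eq_top.mp htop) v
  exact ⟨w, hw⟩

/-- Under the multi-layer MM-ScBM with pure nodes in every row and
column community, if ∑_l B_l B_l' has rank K then S̃_r = ∑_l Ω_l Ω_l' has rank K,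
where Ω_l = ρ Π_r B_l Π_c'. -/
theorem rank_aggregate_matrix {n K L : ℕ}
    (Pr Pc : Matrix (Fin n) (Fin K) ℝ) (ρ : ℝ) (hρ0 : 0 < ρ) (hρ1 : ρ ≤ 1)
    (B : Fin L → Matrix (Fin K) (Fin K) ℝ)
    (hrnonneg : ∀ i k, 0 ≤ Pr i k) (hrrow : ∀ i, ∑ k, Pr i k = 1)
    (hcnonneg : ∀ i k, 0 ≤ Pc i k) (hcrow : ∀ i, ∑ k, Pc i k = 1)
    (fr fc : Fin K → Fin n) (hfr : Function.Injective fr) (hfc : Function.Injective fc)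
    (hpure_r : Pr.submatrix fr id = 1) (hpure_c : Pc.submatrix fc id = 1)
    (hB : (∑ l, B l * (B l)ᵀ).rank = K) :
    (∑ l, (ρ • (Pr * B l * Pcᵀ)) * (ρ • (Pr * B l * Pcᵀ))ᵀ).rank = K := by
  classical
  set G : Matrix (Fin K) (Fin K) ℝ := Pcᵀ * Pc with hGdef
  set C : Matrix (Fin K) (Fin K) ℝ := ∑ l, B l * G * (B l)ᵀ with hCdef
  -- D := ∑ B l * (B l)ᵀ is invertible
  have hDunit : IsUnit (∑ l, B l * (B l)ᵀ) := isUnit_of_rank_eq_card _ hB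
  have hDinj : Function.Injective ((∑ l, B l * (B l)ᵀ).mulVec) :=
    Matrix.mulVec_injective_iff_isUnit.mpr hDunit
  -- Pc has injective mulVec
  have hPcinj : ∀ y : Fin K → ℝ, Pc *ᵥ y = 0 → y = 0 := by
    intro y hy
    funext k
    have h1 := congrFun hy (fc k)
    have h2 : (Pc *ᵥ y) (fc k) = ∑ j, Pc (fc k) j * y j := rfl
    have h3 : ∀ j, Pc (fc k) j = (1 : Matrix (Fin K) (Fin K) ℝ) k j := by
      intro j
      rw [← hpure_c]; rfl
    simp only [h2, h3] at h1
    simpa [Matrix.one_apply, Finset.sum_ite_eq] using h1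
  -- C is positive definite
  have hCpd : C.PosDef := by
    rw [Matrix.posDef_iff_dotProduct_mulVec]
    constructor
    · show Cᴴ = C
      have : Cᴴ = Cᵀ := rfl
      rw [this, hCdef, Matrix.transpose_sum]
      refine Finset.sum_congr rfl fun l _ => ?_
      simp [Matrix.transpose_mul, hGdef, Matrix.mul_assoc]
    · intro x hx
      have hstar : (star x : Fin K → ℝ) = x := by simp
      rw [hstar, hCdef]
      have hterm : ∀ l, x ⬝ᵥ ((B l * G * (B l)ᵀ) *ᵥ x)
          = (Pc *ᵥ ((B l)ᵀ *ᵥ x)) ⬝ᵥ (Pc *ᵥ ((B l)ᵀ *ᵥ x)) := by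
        intro l
        rw [hGdef]
        rw [show B l * (Pcᵀ * Pc) * (B l)ᵀ = (Pc * (B l)ᵀ)ᵀ * (Pc * (B l)ᵀ) by
          simp [Matrix.transpose_mul, Matrix.mul_assoc]]
        rw [← Matrix.mulVec_mulVec, Matrix.dotProduct_mulVec, Matrix.vecMul_transpose,
          Matrix.mulVec_mulVec]
      have hsum : x ⬝ᵥ ((∑ l, B l * G * (B l)ᵀ) *ᵥ x)
          = ∑ l, x ⬝ᵥ ((B l * G * (B l)ᵀ) *ᵥ x) := by
        rw [sum_mulVec', dot_sum']
      rw [hsum]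
      have hnonneg : ∀ l, 0 ≤ x ⬝ᵥ ((B l * G * (B l)ᵀ) *ᵥ x) := fun l => by
        rw [hterm l]; exact dot_self_nonneg _
      refine Finset.sum_pos' (fun l _ => hnonneg l) ?_
      by_contra hall
      push_neg at hall
      have hzero : ∀ l, (B l)ᵀ *ᵥ x = 0 := by
        intro l
        have h0 : x ⬝ᵥ ((B l * G * (B l)ᵀ) *ᵥ x) = 0 :=
          le_antisymm (hall l (Finset.mem_univ l)) (hnonneg l)
        rw [hterm l] at h0
        have := dotProduct_self_eq_zero.mp h0
        exact hPcinj _ this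
      have : (∑ l, B l * (B l)ᵀ) *ᵥ x = 0 := by
        rw [sum_mulVec']
        refine Finset.sum_eq_zero fun l _ => ?_
        rw [← Matrix.mulVec_mulVec, hzero l, Matrix.mulVec_zero]
      have hx0 : x = 0 := by
        have := hDinj (by rw [this, Matrix.mulVec_zero] : (∑ l, B l * (B l)ᵀ) *ᵥ x = (∑ l, B l * (B l)ᵀ) *ᵥ 0)
        exact this
      exact hx hx0
  have hCrank : C.rank = K := by
    rw [Matrix.rank_of_isUnit C hCpd.isUnit, Fintype.card_fin]
  -- rewrite the sum
  have hS : (∑ l, (ρ • (Pr * B l * Pcᵀ)) * (ρ • (Pr * B l * Pcᵀ))ᵀ)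
      = (ρ ^ 2 • (1 : Matrix (Fin n) (Fin n) ℝ)) * (Pr * C * Prᵀ) := by
    rw [Matrix.smul_mul, one_mul, hCdef, Matrix.mul_sum, Matrix.sum_mul, Finset.smul_sum]
    refine Finset.sum_congr rfl fun l _ => ?_
    rw [Matrix.transpose_smul, Matrix.smul_mul, Matrix.mul_smul, smul_smul, ← sq]
    congr 1
    simp only [Matrix.transpose_mul, Matrix.transpose_transpose, hGdef, Matrix.mul_assoc]
  rw [hS]
  have hscale : IsUnit (ρ ^ 2 • (1 : Matrix (Fin n) (Fin n) ℝ)).det := by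
    have : (ρ ^ 2 • (1 : Matrix (Fin n) (Fin n) ℝ)).det = (ρ ^ 2) ^ n := by
      simp [Matrix.det_smul]
    rw [this]
    exact (pow_ne_zero _ (pow_ne_zero _ hρ0.ne')).isUnit
  rw [Matrix.rank_mul_eq_right_of_isUnit_det _ _ hscale]
  -- now rank (Pr * C * Prᵀ) = K
  refine le_antisymm ?_ ?_
  · calc (Pr * C * Prᵀ).rank ≤ (Pr * C).rank := Matrix.rank_mul_le_left _ _
      _ ≤ C.rank := Matrix.rank_mul_le_right _ _
      _ = K := hCrank
  · -- use selection matrix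
    set E : Matrix (Fin K) (Fin n) ℝ := fun k i => if fr k = i then 1 else 0 with hEdef
    have hEPr : E * Pr = 1 := by
      ext k j
      rw [← hpure_r]
      rw [Matrix.mul_apply]
      simp only [hEdef]
      simp [Finset.sum_ite_eq, Matrix.submatrix_apply]
    have key : E * (Pr * C * Prᵀ) * Eᵀ = C := by
      have h1 : E * (Pr * C * Prᵀ) * Eᵀ = (E * Pr) * C * (E * Pr)ᵀ := by
        simp only [Matrix.transpose_mul, Matrix.mul_assoc]
      rw [h1, hEPr]
      simp
    calc K = C.rank := hCrank.symm
      _ = (E * (Pr * C * Prᵀ) * Eᵀ).rank := by rw [key]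
      _ ≤ (E * (Pr * C * Prᵀ)).rank := Matrix.rank_mul_le_left _ _
      _ ≤ (Pr * C * Prᵀ).rank := Matrix.rank_mul_le_right _ _
end

section
/- With S̃_r = Σ_{l=1}^L Ω_l Ω_l' where Ω_l = ρ Π_r B_l Π_c', suppose Σ_l B_l B_l' has rank K and Π_r, Π_c contain pure nodes with index sets I_r, I_c (so Π_r(I_r,:) = I_K). If U_r ∈ ℝ^{n×K} consists of the leading K eigenvectors of S̃_r (i.e., S̃_r = U_r Λ_r U_r' with U_r'U_r = I_K and Λ_r invertible diagonal), then U_r = Π_r · U_r(I_r,:). -/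
open Matrix

/-- If U_r consists of the leading K eigenvectors of
S̃_r = ∑_l Ω_l Ω_l' (i.e. S̃_r = U_r Λ_r U_r' with U_r'U_r = I_K and Λ_r an
invertible diagonal matrix), then U_r = Π_r · U_r(I_r,:) (ideal simplex). -/
theorem ideal_simplex {n K L : ℕ}
    (Pr Pc : Matrix (Fin n) (Fin K) ℝ) (ρ : ℝ) (hρ0 : 0 < ρ) (hρ1 : ρ ≤ 1)
    (B : Fin L → Matrix (Fin K) (Fin K) ℝ)
    (hBrange : ∀ l k k', B l k k' ∈ Set.Icc (0:ℝ) 1)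
    (hrnonneg : ∀ i k, 0 ≤ Pr i k) (hrrow : ∀ i, ∑ k, Pr i k = 1)
    (hcnonneg : ∀ i k, 0 ≤ Pc i k) (hcrow : ∀ i, ∑ k, Pc i k = 1)
    (fr fc : Fin K → Fin n) (hfr : Function.Injective fr) (hfc : Function.Injective fc)
    (hpure_r : Pr.submatrix fr id = 1) (hpure_c : Pc.submatrix fc id = 1)
    (hB : (∑ l, B l * (B l)ᵀ).rank = K)
    (U : Matrix (Fin n) (Fin K) ℝ) (d : Fin K → ℝ) (hd : ∀ k, d k ≠ 0)
    (hU : Uᵀ * U = 1)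
    (hdecomp : (∑ l, (ρ • (Pr * B l * Pcᵀ)) * (ρ • (Pr * B l * Pcᵀ))ᵀ)
        = U * Matrix.diagonal d * Uᵀ) :
    U = Pr * U.submatrix fr id := by
  set S := (∑ l, (ρ • (Pr * B l * Pcᵀ)) * (ρ • (Pr * B l * Pcᵀ))ᵀ) with hS
  have hSU : S * U = U * Matrix.diagonal d := by
    rw [hdecomp, Matrix.mul_assoc, hU, Matrix.mul_one]
  have hdinv : Matrix.diagonal d * Matrix.diagonal (fun k => (d k)⁻¹) = 1 := by
    rw [Matrix.diagonal_mul_diagonal]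
    have : (fun k => d k * (d k)⁻¹) = fun _ => (1 : ℝ) := by
      funext k; exact mul_inv_cancel₀ (hd k)
    rw [this, Matrix.diagonal_one]
  have hUeq : U = S * U * Matrix.diagonal (fun k => (d k)⁻¹) := by
    rw [hSU, Matrix.mul_assoc, hdinv, Matrix.mul_one]
  set X := (∑ l, (ρ • (B l * Pcᵀ)) * (ρ • (Pr * B l * Pcᵀ))ᵀ) * U
      * Matrix.diagonal (fun k => (d k)⁻¹) with hX
  have hfactor : S = Pr * (∑ l, (ρ • (B l * Pcᵀ)) * (ρ • (Pr * B l * Pcᵀ))ᵀ) := by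
    rw [hS, Matrix.mul_sum]
    refine Finset.sum_congr rfl fun l _ => ?_
    rw [← Matrix.mul_assoc]
    congr 1
    rw [Matrix.mul_smul, Matrix.mul_assoc]
  have hUPX : U = Pr * X := by
    rw [hX, ← Matrix.mul_assoc, ← Matrix.mul_assoc, ← hfactor, ← hUeq]
  have hsub : U.submatrix fr id = X := by
    rw [hUPX]
    ext i j
    have hp : ∀ k, Pr (fr i) k = if i = k then 1 else 0 := by
      intro k
      have := congrFun (congrFun hpure_r i) k
      simpa [Matrix.one_apply] using this
    simp [Matrix.submatrix_apply, Matrix.mul_apply, hp, ite_mul]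
  rw [hsub, ← hUPX]
end
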